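/- arXiv:2009.10875 — 2 statements merged into one kernel-verified Lean document; each statement's English description precedes it below -/
import Mathlib

section
/- The belief-state DFA characterizes certainty of acceptance: for a DFA D over Σ1 × Σ2 with accepting set F, the DFA B produced by the belief-state construction (complement, project onto Σ1, determinize, complement) accepts a1…an if and only if for every choice of b1,…,bn ∈ Σ2, the run of D on (a1,b1)…(an,bn) ends in F. -/
/-- The belief-state DFA of a DFA `D` over `Σ₁ × Σ₂`: complement `D`'s accepting
set, view `D` as an NFA and project away the `Σ₂` component
(`Δ'(s,a) = { δ(s,(a,b)) | b ∈ Σ₂ }`), determinize via subset construction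
starting from `{s₀}`, and complement the accepting set of the result. -/
def DFA.beliefDFA {α β : Type*} {σ : Type*} (D : DFA (α × β) σ) : DFA α (Set σ) :=
  { step := fun T a => { t | ∃ s ∈ T, ∃ b : β, D.step s (a, b) = t }
    start := {D.start}
    accept := { T : Set σ | ¬ (T ∩ D.acceptᶜ).Nonempty } }

lemma DFA.beliefDFA_evalFrom {α β : Type*} {σ : Type*} (D : DFA (α × β) σ) :
    ∀ (x : List α) (T : Set σ),
      D.beliefDFA.evalFrom T x =
        { t | ∃ s ∈ T, ∃ bs : List β, bs.length = x.length ∧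
            D.evalFrom s (x.zip bs) = t } := by
  intro x
  induction x with
  | nil =>
    intro T
    ext t
    simp [DFA.evalFrom]
  | cons a x ih =>
    intro T
    rw [show D.beliefDFA.evalFrom T (a :: x)
        = D.beliefDFA.evalFrom (D.beliefDFA.step T a) x from rfl, ih]
    ext t
    simp only [Set.mem_setOf_eq]
    constructor
    · rintro ⟨s', ⟨s, hs, b, rfl⟩, bs, hlen, rfl⟩
      exact ⟨s, hs, b :: bs, by simp [hlen], rfl⟩
    · rintro ⟨s, hs, bs, hlen, rfl⟩
      match bs, hlen with
      | b :: bs, hlen =>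
        exact ⟨D.step s (a, b), ⟨s, hs, b, rfl⟩, bs, by simpa using hlen, rfl⟩

/-- The belief-state DFA characterizes certainty of acceptance: `B` accepts
`a₁…aₙ` iff for every choice of `b₁,…,bₙ`, the run of `D` on `(a₁,b₁)…(aₙ,bₙ)`
ends in `F`. -/
theorem DFA.beliefDFA_correct {α β : Type*} {σ : Type*} (D : DFA (α × β) σ) :
    ∀ w : List α,
      w ∈ D.beliefDFA.accepts ↔
        ∀ bs : List β, bs.length = w.length → w.zip bs ∈ D.accepts := by
  intro w
  have h := D.beliefDFA_evalFrom w {D.start}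
  rw [DFA.mem_accepts]
  show D.beliefDFA.evalFrom {D.start} w ∈ _ ↔ _
  rw [h]
  simp only [DFA.beliefDFA, Set.mem_setOf_eq, Set.Nonempty, Set.mem_inter_iff,
    Set.mem_compl_iff, not_exists]
  constructor
  · intro H bs hlen
    by_contra hacc
    exact H (D.evalFrom D.start (w.zip bs))
      ⟨⟨D.start, rfl, bs, hlen, rfl⟩, hacc⟩
  · rintro H t ⟨⟨s, rfl, bs, hlen, rfl⟩, hacc⟩
    exact hacc (H bs hlen)
end

section
/- Equivalence of the two partial-observability constructions: for a DFA D over Σ1 × Σ2, the DFA obtained by the belief-state construction applied to D accepts exactly the same language as the DFA obtained by the projection-based construction applied to the complement of D (i.e., complement D, view as NFA, project onto Σ1, determinize, complement). Both accept { a1…an | ∀ b1,…,bn, D accepts (a1,b1)…(an,bn) }. -/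
/-- The projection-based construction applied to an NFA `N` over `Σ₁ × Σ₂`:
project onto `Σ₁`, determinize via subset construction, complement. -/
def NFA.projDetComp {α β : Type*} {τ : Type*} (N : NFA (α × β) τ) : DFA α (Set τ) :=
  { step := fun T a => ⋃ s ∈ T, ⋃ b : β, N.step s (a, b)
    start := N.start
    accept := { T : Set τ | ¬ (T ∩ N.accept).Nonempty } }

/-! The belief-state DFA of `D` is literally the projection-based construction applied to the
complement of `D` viewed as an NFA, so it suffices to compute the language of `N.projDetComp`
for an arbitrary `N`. After reading `w`, its subset state is the union of the `N`-state sets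
reached on all the words `w.zip bs` with `bs` of the same length as `w`; hence it accepts `w`
exactly when `N` rejects every such word, a condition depending on `N.accepts` alone. -/

namespace NFA

variable {α β τ : Type*} (N : NFA (α × β) τ)

theorem projDetComp_step (T : Set τ) (a : α) :
    N.projDetComp.step T a = ⋃ b : β, N.stepSet T (a, b) := by
  ext t
  simp only [projDetComp, stepSet, Set.mem_iUnion]
  tauto

theorem projDetComp_evalFrom (T : Set τ) (w : List α) :
    N.projDetComp.evalFrom T w =
      ⋃ (bs : List β) (_ : bs.length = w.length), N.evalFrom T (w.zip bs) := by
  induction w generalizing T with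
  | nil => ext t; simp [List.length_eq_zero_iff]
  | cons a w ih =>
    ext t
    simp only [DFA.evalFrom_cons, ih, projDetComp_step, evalFrom_iUnion, Set.mem_iUnion,
      exists_prop, List.length_cons]
    constructor
    · rintro ⟨bs, hlen, b, ht⟩
      exact ⟨b :: bs, by rw [List.length_cons, hlen], ht⟩
    · rintro ⟨_ | ⟨b, bs⟩, hlen, ht⟩
      · simp at hlen
      · exact ⟨bs, Nat.succ_injective hlen, b, ht⟩

theorem mem_projDetComp_accepts {w : List α} :
    w ∈ N.projDetComp.accepts ↔ ∀ bs : List β, bs.length = w.length → w.zip bs ∉ N.accepts := by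
  change ¬(N.projDetComp.evalFrom N.start w ∩ N.accept).Nonempty ↔ _
  simp only [projDetComp_evalFrom, mem_accepts, Set.Nonempty, Set.mem_inter_iff, Set.mem_iUnion,
    exists_prop, not_exists]
  grind

end NFA

theorem DFA.beliefDFA_eq_projDetComp {α β σ : Type*} (D : DFA (α × β) σ) :
    D.beliefDFA = Dᶜ.toNFA.projDetComp := by
  simp only [DFA.beliefDFA, NFA.projDetComp, DFA.toNFA, DFA.compl_def]
  congr 1
  funext T a
  ext t
  simp [eq_comm]

theorem DFA.mem_beliefDFA_accepts {α β σ : Type*} (D : DFA (α × β) σ) {w : List α} :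
    w ∈ D.beliefDFA.accepts ↔ ∀ bs : List β, bs.length = w.length → w.zip bs ∈ D.accepts := by
  rw [D.beliefDFA_eq_projDetComp, NFA.mem_projDetComp_accepts, DFA.toNFA_correct,
    DFA.accepts_compl]
  exact forall₂_congr fun _ _ => not_not

/-- Equivalence of the two partial-observability constructions: for a DFA `D`
over `Σ₁ × Σ₂` and any NFA `N` accepting the complement of the language of `D`,
the belief-state construction applied to `D` and the projection-based
construction applied to `N` accept the same language, namely the universal
projection `{ a₁…aₙ | ∀ b₁,…,bₙ, D accepts (a₁,b₁)…(aₙ,bₙ) }`. -/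
theorem belief_eq_projection {α β : Type*} {σ τ : Type*} (D : DFA (α × β) σ)
    (N : NFA (α × β) τ) (hN : N.accepts = D.acceptsᶜ) :
    D.beliefDFA.accepts = N.projDetComp.accepts ∧
      D.beliefDFA.accepts =
        { w : List α | ∀ bs : List β, bs.length = w.length → w.zip bs ∈ D.accepts } := by
  refine ⟨Language.ext fun w => ?_, Language.ext fun w => D.mem_beliefDFA_accepts⟩
  rw [D.mem_beliefDFA_accepts, N.mem_projDetComp_accepts, hN]
  exact forall₂_congr fun _ _ => not_not.symm
end
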